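/- Let q be a positive integer, let X = {x_1,…,x_q}, Y = {y_1,…,y_q}, Z = {z_1,…,z_q} be pairwise disjoint sets, and let S ⊆ X×Y×Z with |S| = p, S = {s_1,…,s_p}. Construct the multigraph G with vertex set X ∪ Y ∪ Z ∪ {s_1,…,s_p} ∪ {a,b}, where for each triple s_r = (x,y,z) ∈ S the vertex s_r is joined by one edge to each of x, y, and z, and additionally there is a loop aa at vertex a and a loop bb at vertex b. Let I(G) be the incidence matrix of G over GF(2), where the entry in row v and column e is the number of endpoints of e equal to v reduced modulo 2 (so the columns of the loops aa and bb are zero). Let P be the matrix over GF(2) with rows indexed by V(G) and columns indexed by E(G) that is zero except for the following entries: for each i ∈ {1,…,q}, the entries (x_i, aa) = 1, (y_i, aa) = 1, (x_i, bb) = 1, (z_i, bb) = 1. Let A = I(G) + P and T = {aa, bb}. Then S contains a matching — a subset S' ⊆ S with |S'| = q such that no two elements of S' agree in any coordinate — if and only if there exists a set F ⊆ E(G)∖T with |F| ≤ 3q such that both columns A^{aa} and A^{bb} lie in the GF(2)-span of the columns {A^f : f ∈ F}. -/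

import Mathlib

open Matrix

/-- The vertex set of the multigraph `G` in the 3-Dimensional Matching reduction:
the elements of `X = {x_1, …, x_q}`, `Y = {y_1, …, y_q}`, `Z = {z_1, …, z_q}` (each a copy
of `Fin q`), one vertex for each triple in `S`, and the two vertices `a` (encoded `false`)
and `b` (encoded `true`). -/
abbrev TDMVert (q : ℕ) (S : Finset (Fin q × Fin q × Fin q)) : Type :=
  (Fin q ⊕ Fin q ⊕ Fin q) ⊕ ↥S ⊕ Bool

/-- The edge set of `G`: for each triple `s = (x, y, z) ∈ S` three edges joining the
vertex `s` to `x`, to `y` and to `z` (indexed by `Fin 3`), together with the loop `aa`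
(encoded `Sum.inr false`) and the loop `bb` (encoded `Sum.inr true`). -/
abbrev TDMEdge (q : ℕ) (S : Finset (Fin q × Fin q × Fin q)) : Type :=
  (↥S × Fin 3) ⊕ Bool

attribute [local instance] Classical.propDecidable

/-- The incidence matrix of `G` over GF(2): the entry in row `v` and column `e` is the
number of endpoints of `e` equal to `v`, reduced mod 2; in particular the columns of the
loops `aa` and `bb` are zero. -/
noncomputable def incTDM (q : ℕ) (S : Finset (Fin q × Fin q × Fin q)) :
    Matrix (TDMVert q S) (TDMEdge q S) (ZMod 2) :=
  fun w e =>
    match e with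
    | Sum.inl (s, i) =>
        if w = Sum.inr (Sum.inl s) ∨
           (i = 0 ∧ w = Sum.inl (Sum.inl s.1.1)) ∨
           (i = 1 ∧ w = Sum.inl (Sum.inr (Sum.inl s.1.2.1))) ∨
           (i = 2 ∧ w = Sum.inl (Sum.inr (Sum.inr s.1.2.2)))
        then 1 else 0
    | Sum.inr _ => 0

/-- The perturbation matrix `P`: zero except that for each `i ∈ {1, …, q}` the entries
`(x_i, aa) = (y_i, aa) = (x_i, bb) = (z_i, bb) = 1`. -/
noncomputable def pertTDM (q : ℕ) (S : Finset (Fin q × Fin q × Fin q)) :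
    Matrix (TDMVert q S) (TDMEdge q S) (ZMod 2) :=
  fun w e =>
    match e, w with
    | Sum.inr false, Sum.inl (Sum.inl _) => 1
    | Sum.inr false, Sum.inl (Sum.inr (Sum.inl _)) => 1
    | Sum.inr true, Sum.inl (Sum.inl _) => 1
    | Sum.inr true, Sum.inl (Sum.inr (Sum.inr _)) => 1
    | _, _ => 0

/-!
Label the vertex `c` of `X`, `Y`, `Z` by the key `(j, c)` with `j = 0, 1, 2`; the edge `(s, j)`
joins the triple vertex `s` to the key `(j, s_j)`. Over GF(2) a column lies in the span of a
set of columns iff it is the sum of a subset of them, and such an identity says, row by row,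
that every vertex has the prescribed degree parity in the subset. The loop columns are the
indicators of `X ∪ Y` and `X ∪ Z`.

A matching `M` gives `F = M × {0, 1, 2}`: the edges `(s, j)`, `s ∈ M`, `j` in the support of
a loop, sum to that loop's column, because every triple vertex is met twice. Conversely, the
subsets of `F` summing to `aa` and `bb` meet all `3q` keys between them, so `|F| ≤ 3q` forces
each key to be met by exactly one edge of `F`. Parity at the keys then puts `(s, 0)` into the
subset for `aa` whenever `(s, 0) ∈ F`, and keeps `Z`-edges out of it; parity at the triple
vertex `s` forces `(s, 1)` in. Likewise `bb` forces `(s, 2)`, so the triples `s` with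
`(s, 0) ∈ F` form a matching of size `q`.
-/

open Finset

lemma Submodule.exists_finset_sum_eq_of_mem_span_image {ι M : Type*} [AddCommGroup M]
    [Module (ZMod 2) M] {f : ι → M} {s : Set ι} {v : M}
    (hv : v ∈ Submodule.span (ZMod 2) (f '' s)) : ∃ t : Finset ι, ↑t ⊆ s ∧ ∑ i ∈ t, f i = v := by
  obtain ⟨l, hl, rfl⟩ := Finsupp.mem_span_image_iff_linearCombination _ |>.mp hv
  refine ⟨l.support, hl, ?_⟩
  rw [Finsupp.linearCombination_apply, Finsupp.sum]
  refine Finset.sum_congr rfl fun i hi => ?_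
  rw [(by decide : ∀ a : ZMod 2, a ≠ 0 → a = 1) _ (Finsupp.mem_support_iff.mp hi), one_smul]

lemma Finset.nonempty_of_natCast_card_eq_one {α : Type*} {s : Finset α}
    (h : (#s : ZMod 2) = 1) : s.Nonempty := by
  rw [← Finset.card_pos]
  by_contra h0
  simp_all

lemma Finset.exists_mem_ne_of_natCast_card_eq_zero {α : Type*} {s : Finset α} {a : α}
    (h : (#s : ZMod 2) = 0) (ha : a ∈ s) : ∃ b ∈ s, b ≠ a := by
  refine Finset.exists_mem_ne (lt_of_le_of_ne (Finset.card_pos.mpr ⟨a, ha⟩) ?_) a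
  rintro h1
  rw [← h1] at h
  exact one_ne_zero h

lemma Set.exists_finset_eq_image_inl {α β : Type*} [Finite α] {s : Set (α ⊕ β)}
    (hs : Disjoint s (Set.range Sum.inr)) : ∃ t : Finset α, s = Sum.inl '' ↑t := by
  refine ⟨(Set.toFinite (Sum.inl ⁻¹' s)).toFinset, ?_⟩
  rw [Set.Finite.coe_toFinset, Set.image_preimage_eq_of_subset]
  intro x hx
  rcases x with a | b
  · exact ⟨a, rfl⟩
  · exact absurd ⟨b, rfl⟩ (Set.disjoint_left.mp hs hx)

lemma Matrix.exists_span_cover_iff {α V R : Type*} [Finite α] [Semiring R]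
    (A : Matrix V (α ⊕ Bool) R) (n : ℕ) :
    (∃ F : Set (α ⊕ Bool), Disjoint F (Set.range Sum.inr) ∧ F.ncard ≤ n ∧
        Aᵀ (Sum.inr false) ∈ Submodule.span R ((fun e => Aᵀ e) '' F) ∧
        Aᵀ (Sum.inr true) ∈ Submodule.span R ((fun e => Aᵀ e) '' F)) ↔
      ∃ F : Finset α, #F ≤ n ∧
        ∀ b, Aᵀ (Sum.inr b) ∈ Submodule.span R ((fun p => Aᵀ (Sum.inl p)) '' ↑F) := by
  constructor
  · rintro ⟨F, hdisj, hcard, hfalse, htrue⟩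
    obtain ⟨F, rfl⟩ := Set.exists_finset_eq_image_inl hdisj
    rw [Set.image_image] at hfalse htrue
    refine ⟨F, ?_, Bool.forall_bool.mpr ⟨hfalse, htrue⟩⟩
    rwa [Set.ncard_image_of_injective _ Sum.inl_injective, Set.ncard_coe_finset] at hcard
  · rintro ⟨F, hcard, hspan⟩
    refine ⟨Sum.inl '' ↑F, ?_, ?_, ?_, ?_⟩
    · rw [Set.disjoint_left]
      rintro _ ⟨p, -, rfl⟩ ⟨b, hb⟩
      cases hb
    · rwa [Set.ncard_image_of_injective _ Sum.inl_injective, Set.ncard_coe_finset]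
    all_goals rw [Set.image_image]; exact hspan _

namespace TDM

variable {q : ℕ} {S : Finset (Fin q × Fin q × Fin q)}

def coord (t : Fin q × Fin q × Fin q) : Fin 3 → Fin q := ![t.1, t.2.1, t.2.2]

variable (S) in
def coordVert (k : Fin 3 × Fin q) : TDMVert q S :=
  ![Sum.inl (Sum.inl k.2), Sum.inl (Sum.inr (Sum.inl k.2)), Sum.inl (Sum.inr (Sum.inr k.2))] k.1

def edgeKey (p : ↥S × Fin 3) : Fin 3 × Fin q := (p.2, coord p.1.1 p.2)

-- The coordinates (`0, 1, 2` for `X, Y, Z`) of the vertices in the support of the column of the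
-- loop `b`: `X ∪ Y` for `aa` (`false`) and `X ∪ Z` for `bb` (`true`).
def loopCoords (b : Bool) : Finset (Fin 3) := if b then {0, 2} else {0, 1}

lemma card_loopCoords (b : Bool) : #(loopCoords b) = 2 := by
  cases b <;> rfl

lemma exists_mem_loopCoords (j : Fin 3) : ∃ b, j ∈ loopCoords b := by
  revert j; decide

lemma zero_mem_loopCoords (b : Bool) : 0 ∈ loopCoords b := by
  cases b <;> decide

lemma eq_zero_or_eq_of_mem_loopCoords {b : Bool} {i j : Fin 3} (hi0 : i ≠ 0)
    (hi : i ∈ loopCoords b) (hj : j ∈ loopCoords b) : j = 0 ∨ j = i := by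
  revert i j; cases b <;> decide

lemma vertex_cases (w : TDMVert q S) :
    (∃ k, w = coordVert S k) ∨ (∃ s, w = Sum.inr (Sum.inl s)) ∨ ∃ c, w = Sum.inr (Sum.inr c) := by
  rcases w with (x | y | z) | s | c
  exacts [.inl ⟨(0, x), rfl⟩, .inl ⟨(1, y), rfl⟩, .inl ⟨(2, z), rfl⟩, .inr (.inl ⟨s, rfl⟩),
    .inr (.inr ⟨c, rfl⟩)]

lemma incTDM_coordVert (k : Fin 3 × Fin q) (p : ↥S × Fin 3) :
    incTDM q S (coordVert S k) (Sum.inl p) = if edgeKey p = k then 1 else 0 := by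
  obtain ⟨j, c⟩ := k
  obtain ⟨s, i⟩ := p
  fin_cases j <;> fin_cases i <;> simp [incTDM, coordVert, edgeKey, coord, eq_comm]

lemma incTDM_tripleVert (t : ↥S) (p : ↥S × Fin 3) :
    incTDM q S (Sum.inr (Sum.inl t)) (Sum.inl p) = if p.1 = t then 1 else 0 := by
  simp [incTDM, eq_comm]

lemma incTDM_loopVert (c : Bool) (p : ↥S × Fin 3) :
    incTDM q S (Sum.inr (Sum.inr c)) (Sum.inl p) = 0 := by
  simp [incTDM]

lemma pertTDM_coordVert (k : Fin 3 × Fin q) (b : Bool) :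
    pertTDM q S (coordVert S k) (Sum.inr b) = if k.1 ∈ loopCoords b then 1 else 0 := by
  obtain ⟨j, c⟩ := k
  fin_cases j <;> cases b <;> rfl

lemma pertTDM_inl (w : TDMVert q S) (p : ↥S × Fin 3) : pertTDM q S w (Sum.inl p) = 0 := by
  rcases w with (_ | _ | _) | _ | _ <;> rfl

lemma pertTDM_loopVert (c b : Bool) : pertTDM q S (Sum.inr (Sum.inr c)) (Sum.inr b) = 0 := by
  cases b <;> rfl

lemma pertTDM_tripleVert (t : ↥S) (b : Bool) :
    pertTDM q S (Sum.inr (Sum.inl t)) (Sum.inr b) = 0 := by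
  cases b <;> rfl

lemma sum_col_eq_loop_col_iff (b : Bool) (E : Finset (↥S × Fin 3)) :
    ∑ p ∈ E, (incTDM q S + pertTDM q S)ᵀ (Sum.inl p) = (incTDM q S + pertTDM q S)ᵀ (Sum.inr b) ↔
      (∀ k, (#{p ∈ E | edgeKey p = k} : ZMod 2) = if k.1 ∈ loopCoords b then 1 else 0) ∧
      ∀ t, (#{p ∈ E | p.1 = t} : ZMod 2) = 0 := by
  have hloop : ∀ w, incTDM q S w (Sum.inr b) = 0 := fun _ => rfl
  simp only [funext_iff, Finset.sum_apply, Matrix.transpose_apply, Matrix.add_apply, pertTDM_inl,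
    add_zero, hloop, zero_add]
  constructor
  · intro h
    refine ⟨fun k => ?_, fun t => ?_⟩
    · simpa [incTDM_coordVert, pertTDM_coordVert] using h (coordVert S k)
    · simpa [incTDM_tripleVert, pertTDM_tripleVert] using h (Sum.inr (Sum.inl t))
  · rintro ⟨hk, ht⟩ w
    obtain ⟨k, rfl⟩ | ⟨t, rfl⟩ | ⟨c, rfl⟩ := vertex_cases w
    · simpa [incTDM_coordVert, pertTDM_coordVert] using hk k
    · simpa [incTDM_tripleVert, pertTDM_tripleVert] using ht t
    · simp [incTDM_loopVert, pertTDM_loopVert]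

lemma sum_col_matching_eq_loop_col {M : Finset ↥S} (hcard : #M = q)
    (hinj : ∀ j, Set.InjOn (fun s : ↥S => coord s.1 j) M) (b : Bool) :
    ∑ p ∈ M ×ˢ loopCoords b, (incTDM q S + pertTDM q S)ᵀ (Sum.inl p) =
      (incTDM q S + pertTDM q S)ᵀ (Sum.inr b) := by
  refine (sum_col_eq_loop_col_iff b _).mpr ⟨fun ⟨j, c⟩ => ?_, fun t => ?_⟩
  · split_ifs with hj
    swap
    · rw [Finset.filter_false_of_mem fun p hp hpk =>
        hj (congrArg Prod.fst hpk ▸ (Finset.mem_product.mp hp).2), Finset.card_empty, Nat.cast_zero]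
    obtain ⟨s, hs, rfl⟩ := Finset.surjOn_of_injOn_of_card_le (fun s : ↥S => coord s.1 j)
      (fun _ _ => Finset.mem_univ _) (hinj j) (by simp [hcard]) (Finset.mem_univ c)
    suffices {p ∈ M ×ˢ loopCoords b | edgeKey p = (j, coord s.1 j)} = {(s, j)} by
      simp [this]
    ext ⟨t, i⟩
    simp only [edgeKey, Finset.mem_filter, Finset.mem_product,
      Prod.mk.injEq, Finset.mem_singleton]
    constructor
    · rintro ⟨⟨ht, -⟩, rfl, hts⟩
      exact ⟨hinj i ht hs hts, rfl⟩
    · rintro ⟨rfl, rfl⟩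
      exact ⟨⟨hs, hj⟩, rfl, rfl⟩
  · rw [Finset.filter_product_left (· = t), Finset.card_product, card_loopCoords, Nat.cast_mul,
      Nat.cast_ofNat, CharTwo.two_eq_zero (R := ZMod 2), mul_zero]

lemma exists_span_cover_of_matching {M : Finset ↥S} (hcard : #M = q)
    (hinj : ∀ j, Set.InjOn (fun s : ↥S => coord s.1 j) M) :
    ∃ F : Finset (↥S × Fin 3), #F ≤ 3 * q ∧ ∀ b, (incTDM q S + pertTDM q S)ᵀ (Sum.inr b) ∈
      Submodule.span (ZMod 2) ((fun p => (incTDM q S + pertTDM q S)ᵀ (Sum.inl p)) '' ↑F) := by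
  refine ⟨M ×ˢ Finset.univ, by simp [hcard, mul_comm], fun b => ?_⟩
  rw [← sum_col_matching_eq_loop_col hcard hinj b]
  exact Submodule.sum_mem _ fun p hp => Submodule.subset_span
    ⟨p, Finset.product_subset_product_right (Finset.subset_univ _) hp, rfl⟩

section Cover

variable {F : Finset (↥S × Fin 3)}

lemma exists_mem_edgeKey_eq {E : Bool → Finset (↥S × Fin 3)} (hEF : ∀ b, E b ⊆ F)
    (hkey : ∀ b k, (#{p ∈ E b | edgeKey p = k} : ZMod 2) = if k.1 ∈ loopCoords b then 1 else 0)
    (k : Fin 3 × Fin q) : ∃ p ∈ F, edgeKey p = k := by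
  obtain ⟨b, hb⟩ := exists_mem_loopCoords k.1
  obtain ⟨p, hp⟩ := Finset.nonempty_of_natCast_card_eq_one ((hkey b k).trans (if_pos hb))
  exact ⟨p, hEF b (Finset.mem_filter.mp hp).1, (Finset.mem_filter.mp hp).2⟩

lemma edgeKey_injOn (hF : #F ≤ 3 * q) (hsurj : ∀ k, ∃ p ∈ F, edgeKey p = k) :
    Set.InjOn edgeKey (F : Set (↥S × Fin 3)) :=
  Finset.injOn_of_surjOn_of_card_le (t := Finset.univ) _ (fun _ _ => Finset.mem_univ _)
    (fun k _ => hsurj k) (by simpa using hF)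

lemma mem_of_row_parities {E : Finset (↥S × Fin 3)} {b : Bool}
    (hinj : Set.InjOn edgeKey (F : Set (↥S × Fin 3))) (hEF : E ⊆ F)
    (hkey : ∀ k, (#{p ∈ E | edgeKey p = k} : ZMod 2) = if k.1 ∈ loopCoords b then 1 else 0)
    (htriple : ∀ t, (#{p ∈ E | p.1 = t} : ZMod 2) = 0)
    {s : ↥S} (hs : (s, 0) ∈ F) {j : Fin 3} (hj : j ∈ loopCoords b) : (s, j) ∈ F := by
  -- Such a key has even degree in `E`, yet it is met by at most one edge of `F`.
  have hE_loop : ∀ p ∈ E, p.2 ∈ loopCoords b := by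
    intro p hp
    by_contra hpb
    obtain ⟨p', hp', hne⟩ := Finset.exists_mem_ne_of_natCast_card_eq_zero
      ((hkey (edgeKey p)).trans (if_neg hpb)) (Finset.mem_filter.mpr ⟨hp, rfl⟩)
    exact hne (hinj (hEF (Finset.mem_filter.mp hp').1) (hEF hp) (Finset.mem_filter.mp hp').2)
  have hs0 : (s, 0) ∈ E := by
    obtain ⟨p, hp⟩ := Finset.nonempty_of_natCast_card_eq_one
      ((hkey (edgeKey (s, 0))).trans (if_pos (zero_mem_loopCoords b)))
    obtain ⟨hpE, hpk⟩ := Finset.mem_filter.mp hp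
    rwa [← hinj (hEF hpE) hs hpk]
  obtain ⟨⟨s', i⟩, hp, hne⟩ :=
    Finset.exists_mem_ne_of_natCast_card_eq_zero (htriple s) (Finset.mem_filter.mpr ⟨hs0, rfl⟩)
  obtain ⟨hpE, rfl : s' = s⟩ := Finset.mem_filter.mp hp
  rcases eq_zero_or_eq_of_mem_loopCoords (fun hi => hne (hi ▸ rfl)) (hE_loop _ hpE) hj with
    rfl | rfl
  exacts [hs, hEF hpE]

lemma exists_matching_of_span_cover (hF : #F ≤ 3 * q)
    (hspan : ∀ b, (incTDM q S + pertTDM q S)ᵀ (Sum.inr b) ∈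
      Submodule.span (ZMod 2) ((fun p => (incTDM q S + pertTDM q S)ᵀ (Sum.inl p)) '' ↑F)) :
    ∃ M : Finset ↥S, #M = q ∧ ∀ j, Set.InjOn (fun s : ↥S => coord s.1 j) M := by
  choose E hEF hE using fun b => Submodule.exists_finset_sum_eq_of_mem_span_image (hspan b)
  have hrows b := (sum_col_eq_loop_col_iff b (E b)).mp (hE b)
  have hEF' b : E b ⊆ F := Finset.coe_subset.mp (hEF b)
  have hsurj := exists_mem_edgeKey_eq hEF' fun b => (hrows b).1
  have hinj := edgeKey_injOn hF hsurj
  have hfull : ∀ s, (s, 0) ∈ F → ∀ j, (s, j) ∈ F := fun s hs j => by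
    obtain ⟨b, hb⟩ := exists_mem_loopCoords j
    exact mem_of_row_parities hinj (hEF' b) (hrows b).1 (hrows b).2 hs hb
  have hM : ∀ j, Set.InjOn (fun s : ↥S => coord s.1 j) ({s | (s, 0) ∈ F} : Finset ↥S) :=
    fun j s hs t ht hst => congrArg Prod.fst <| hinj (hfull s (Finset.mem_filter.mp hs).2 j)
      (hfull t (Finset.mem_filter.mp ht).2 j) (by simp [edgeKey, hst])
  refine ⟨_, ?_, hM⟩
  rw [Finset.card_nbij (t := Finset.univ) _ (fun _ _ => Finset.mem_univ _) (hM 0), Finset.card_univ,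
    Fintype.card_fin]
  intro c _
  obtain ⟨⟨s, i⟩, hp, hpk⟩ := hsurj (0, c)
  obtain ⟨rfl, rfl⟩ := Prod.mk.inj hpk
  exact ⟨s, Finset.mem_filter.mpr ⟨Finset.mem_univ _, hp⟩, rfl⟩

end Cover

lemma ne_and_ne_and_ne_iff_forall_coord_ne (a b : Fin q × Fin q × Fin q) :
    (a.1 ≠ b.1 ∧ a.2.1 ≠ b.2.1 ∧ a.2.2 ≠ b.2.2) ↔ ∀ j, coord a j ≠ coord b j := by
  simp [Fin.forall_fin_succ, coord]

lemma exists_matching_iff :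
    (∃ S' ⊆ S, #S' = q ∧ ∀ a ∈ S', ∀ b ∈ S', a ≠ b →
        a.1 ≠ b.1 ∧ a.2.1 ≠ b.2.1 ∧ a.2.2 ≠ b.2.2) ↔
      ∃ M : Finset ↥S, #M = q ∧ ∀ j, Set.InjOn (fun s : ↥S => coord s.1 j) M := by
  simp only [ne_and_ne_and_ne_iff_forall_coord_ne]
  constructor
  · rintro ⟨S', hS', hcard, hmatch⟩
    refine ⟨S'.subtype (· ∈ S), ?_, fun j s hs t ht hst => ?_⟩
    · rw [Finset.card_subtype, Finset.filter_true_of_mem hS', hcard]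
    · by_contra hne
      exact hmatch s (Finset.mem_subtype.mp hs) t (Finset.mem_subtype.mp ht)
        (Subtype.coe_injective.ne hne) j hst
  · rintro ⟨M, hcard, hinj⟩
    refine ⟨M.map (Function.Embedding.subtype _), ?_, by rw [Finset.card_map, hcard], ?_⟩
    · intro a ha
      obtain ⟨s, -, rfl⟩ := Finset.mem_map.mp ha
      exact s.2
    · simp only [Finset.mem_map, Function.Embedding.coe_subtype]
      rintro _ ⟨s, hs, rfl⟩ _ ⟨t, ht, rfl⟩ hne j hst
      exact hne (congrArg Subtype.val (hinj j hs ht hst))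

end TDM

theorem threeDimensionalMatching_iff_spaceCoverPGM_general
    (q : ℕ) (S : Finset (Fin q × Fin q × Fin q))
    (A : Matrix (TDMVert q S) (TDMEdge q S) (ZMod 2))
    (hA : A = incTDM q S + pertTDM q S) :
    (∃ S' ⊆ S, S'.card = q ∧ ∀ a ∈ S', ∀ b ∈ S', a ≠ b →
        a.1 ≠ b.1 ∧ a.2.1 ≠ b.2.1 ∧ a.2.2 ≠ b.2.2) ↔
      (∃ F : Set (TDMEdge q S),
        Disjoint F (Set.range (Sum.inr : Bool → TDMEdge q S)) ∧
        F.ncard ≤ 3 * q ∧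
        Aᵀ (Sum.inr false) ∈
          Submodule.span (ZMod 2) ((fun e : TDMEdge q S => Aᵀ e) '' F) ∧
        Aᵀ (Sum.inr true) ∈
          Submodule.span (ZMod 2) ((fun e : TDMEdge q S => Aᵀ e) '' F)) := by
  subst hA
  rw [TDM.exists_matching_iff, Matrix.exists_span_cover_iff]
  exact ⟨fun ⟨_, hcard, hinj⟩ => TDM.exists_span_cover_of_matching hcard hinj,
    fun ⟨_, hF, hspan⟩ => TDM.exists_matching_of_span_cover hF hspan⟩

/-- Correctness of the NP-hardness reduction from 3-Dimensional
Matching: with `A = I(G) + P` and terminals `T = {aa, bb}`, the set `S` contains a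
matching (a subset `S' ⊆ S` with `|S'| = q` no two of whose elements agree in any
coordinate) if and only if there is a set `F ⊆ E(G) ∖ T` with `|F| ≤ 3q` such that both
columns `A^{aa}` and `A^{bb}` lie in the GF(2)-span of the columns `{A^f : f ∈ F}`. -/
theorem threeDimensionalMatching_iff_spaceCoverPGM
    (q : ℕ) (hq : 0 < q) (S : Finset (Fin q × Fin q × Fin q))
    (A : Matrix (TDMVert q S) (TDMEdge q S) (ZMod 2))
    (hA : A = incTDM q S + pertTDM q S) :
    (∃ S' ⊆ S, S'.card = q ∧ ∀ a ∈ S', ∀ b ∈ S', a ≠ b →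
        a.1 ≠ b.1 ∧ a.2.1 ≠ b.2.1 ∧ a.2.2 ≠ b.2.2) ↔
      (∃ F : Set (TDMEdge q S),
        Disjoint F (Set.range (Sum.inr : Bool → TDMEdge q S)) ∧
        F.ncard ≤ 3 * q ∧
        Aᵀ (Sum.inr false) ∈
          Submodule.span (ZMod 2) ((fun e : TDMEdge q S => Aᵀ e) '' F) ∧
        Aᵀ (Sum.inr true) ∈
          Submodule.span (ZMod 2) ((fun e : TDMEdge q S => Aᵀ e) '' F)) :=
  threeDimensionalMatching_iff_spaceCoverPGM_general q S A hA
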